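/- If a, b, c, d ∈ [7/10, 1] and 0 < p_s ≤ 0.818, then P(a,b)·P(c,d)·p_s ≥ P(f(a,c), f(b,d))·p_s^2, where P(x,y) = (8/9)xy - (2/9)(x+y) + 5/9 and f(x,y) = (1/4)(1 + (1/3)(4x-1)(4y-1)). -/
import Mathlib

noncomputable def P (x y : ℝ) : ℝ := (8/9) * x * y - (2/9) * (x + y) + 5/9

noncomputable def f (x y : ℝ) : ℝ :=
  (1/4) * (1 + (1/3) * (4*x - 1) * (4*y - 1))

theorem purify_and_swap_success_prob (a b c d ps : ℝ)
    (ha : 7/10 ≤ a) (ha' : a ≤ 1) (hb : 7/10 ≤ b) (hb' : b ≤ 1)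
    (hc : 7/10 ≤ c) (hc' : c ≤ 1) (hd : 7/10 ≤ d) (hd' : d ≤ 1)
    (hps : 0 < ps) (hps' : ps ≤ 0.818) :
    P a b * P c d * ps ≥ P (f a c) (f b d) * ps^2 := by
  have hPf : 0 ≤ P (f a c) (f b d) := by
    simp only [P, f]
    nlinarith [mul_nonneg (sub_nonneg.2 ha) (sub_nonneg.2 hc), mul_nonneg (sub_nonneg.2 hb) (sub_nonneg.2 hd), mul_nonneg (sub_nonneg.2 ha') (sub_nonneg.2 hc'), mul_nonneg (sub_nonneg.2 hb') (sub_nonneg.2 hd')]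
  have key : P a b * P c d ≥ 818/1000 * P (f a c) (f b d) := by
    simp only [P, f]
    nlinarith [mul_nonneg (mul_nonneg (sub_nonneg.2 ha) (sub_nonneg.2 hb)) (mul_nonneg (sub_nonneg.2 hc) (sub_nonneg.2 hd)),
      mul_nonneg (sub_nonneg.2 ha) (sub_nonneg.2 hb), mul_nonneg (sub_nonneg.2 hc) (sub_nonneg.2 hd),
      mul_nonneg (sub_nonneg.2 ha) (sub_nonneg.2 hc), mul_nonneg (sub_nonneg.2 hb) (sub_nonneg.2 hd),
      mul_nonneg (sub_nonneg.2 ha) (sub_nonneg.2 hd), mul_nonneg (sub_nonneg.2 hb) (sub_nonneg.2 hc),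
      mul_nonneg (sub_nonneg.2 ha') (sub_nonneg.2 hb'), mul_nonneg (sub_nonneg.2 hc') (sub_nonneg.2 hd'),
      mul_nonneg (sub_nonneg.2 ha') (sub_nonneg.2 hc'), mul_nonneg (sub_nonneg.2 hb') (sub_nonneg.2 hd'),
      mul_nonneg (sub_nonneg.2 ha) (sub_nonneg.2 hb'), mul_nonneg (sub_nonneg.2 hc) (sub_nonneg.2 hd')]
  have h8 : (0.818 : ℝ) = 818/1000 := by norm_num
  nlinarith [mul_le_mul_of_nonneg_left hps' (le_of_lt hps), mul_nonneg hPf (le_of_lt hps), mul_nonneg hPf (sub_nonneg.2 hps'), mul_pos hps hps]
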